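/- Let p, q, r be probability measures on a measurable space with p absolutely continuous with respect to q and q absolutely continuous with respect to r. Let u, v ∈ (1,∞) be conjugate exponents with 1/u + 1/v = 1, and let j ≥ 2 be an integer. Then ∫ |dp/dr − dq/dr|^j dr ≤ exp( (j−1)·D_{(j−1)v+1}(q‖r) ) · ( ∫ |dp/dq − 1|^{ju} dq )^{1/u}. -/

import Mathlib

/-!
Since `dp/dr = (dp/dq) · (dq/dr)` `r`-a.e., the integrand on the left is `|dp/dq - 1|^j (dq/dr)^j`,
and changing measure from `r` to `q` leaves `|dp/dq - 1|^j (dq/dr)^(j-1)` to be integrated against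
`q`. Hölder's inequality with exponents `u, v` bounds this by the `L^(ju)(q)` factor times
`(∫ (dq/dr)^((j-1)v) dq)^(1/v) = (∫ (dq/dr)^((j-1)v+1) dr)^(1/v)`, and the latter is exactly
`exp((j-1) · D_{(j-1)v+1}(q‖r))`.
-/

open MeasureTheory ENNReal Real

/-- Rényi divergence of order `a`:
`D_a(p‖q) = (a-1)⁻¹ · log ∫ (dp/dq)^a dq`, valued in the extended reals. -/
noncomputable def renyiDiv {Θ : Type*} [MeasurableSpace Θ]
    (p q : Measure Θ) (a : ℝ) : EReal :=
  (((a - 1)⁻¹ : ℝ) : EReal) * ENNReal.log (∫⁻ θ, p.rnDeriv q θ ^ a ∂q)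

theorem ENNReal.max_tsub_tsub_mul_right (a b : ℝ≥0∞) {c : ℝ≥0∞} (hc : c ≠ ∞) :
    max (a - b) (b - a) * c = max (a * c - b * c) (b * c - a * c) := by
  rw [(mul_left_mono (a := c)).map_max, ENNReal.sub_mul fun _ _ => hc,
    ENNReal.sub_mul fun _ _ => hc]

theorem exp_mul_renyiDiv {Θ : Type*} [MeasurableSpace Θ] (p q : Measure Θ) (a t : ℝ) :
    EReal.exp ((t : EReal) * renyiDiv p q a) =
      (∫⁻ θ, p.rnDeriv q θ ^ a ∂q) ^ (t * (a - 1)⁻¹) := by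
  rw [renyiDiv, ← mul_assoc, ← EReal.coe_mul, ← ENNReal.log_rpow, ENNReal.exp_log]

namespace MeasureTheory.Measure

variable {Θ : Type*} [MeasurableSpace Θ] {μ ν κ : Measure Θ}

theorem rnDeriv_max_tsub_ae_eq [SigmaFinite μ] [SigmaFinite ν] [SigmaFinite κ] (hμν : μ ≪ ν) :
    (fun θ ↦ max (μ.rnDeriv κ θ - ν.rnDeriv κ θ) (ν.rnDeriv κ θ - μ.rnDeriv κ θ)) =ᵐ[κ]
      fun θ ↦ max (μ.rnDeriv ν θ - 1) (1 - μ.rnDeriv ν θ) * ν.rnDeriv κ θ := by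
  filter_upwards [rnDeriv_mul_rnDeriv hμν (κ := κ), ν.rnDeriv_ne_top κ] with θ hchain hfin
  rw [ENNReal.max_tsub_tsub_mul_right _ _ hfin, one_mul, ← hchain, Pi.mul_apply]

variable [ν.HaveLebesgueDecomposition κ]

theorem lintegral_mul_rnDeriv_pow_succ (hνκ : ν ≪ κ) {f : Θ → ℝ≥0∞} (hf : Measurable f) (n : ℕ) :
    ∫⁻ θ, (f θ * ν.rnDeriv κ θ) ^ (n + 1) ∂κ = ∫⁻ θ, f θ ^ (n + 1) * ν.rnDeriv κ θ ^ n ∂ν := by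
  rw [← lintegral_rnDeriv_mul hνκ (by fun_prop)]
  congr 1 with θ
  ring

theorem lintegral_rnDeriv_rpow_add_one (hνκ : ν ≪ κ) {c : ℝ} (hc : 0 ≤ c) :
    ∫⁻ θ, ν.rnDeriv κ θ ^ c ∂ν = ∫⁻ θ, ν.rnDeriv κ θ ^ (c + 1) ∂κ := by
  rw [← lintegral_rnDeriv_mul hνκ (by fun_prop)]
  congr 1 with θ
  rw [ENNReal.rpow_add_of_nonneg _ _ hc zero_le_one, ENNReal.rpow_one, mul_comm]

theorem lintegral_mul_rnDeriv_pow_succ_le (hνκ : ν ≪ κ) {f : Θ → ℝ≥0∞} (hf : Measurable f)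
    (n : ℕ) {u v : ℝ} (huv : u.HolderConjugate v) :
    ∫⁻ θ, (f θ * ν.rnDeriv κ θ) ^ (n + 1) ∂κ ≤
      (∫⁻ θ, f θ ^ (((n + 1 : ℕ) : ℝ) * u) ∂ν) ^ (1 / u) *
        (∫⁻ θ, ν.rnDeriv κ θ ^ (n * v + 1) ∂κ) ^ (1 / v) := by
  rw [lintegral_mul_rnDeriv_pow_succ hνκ hf,
    ← lintegral_rnDeriv_rpow_add_one hνκ (by positivity [huv.symm.nonneg])]
  simp_rw [ENNReal.rpow_mul, ENNReal.rpow_natCast]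
  exact ENNReal.lintegral_mul_le_Lp_mul_Lq ν huv (by fun_prop) (by fun_prop)

end MeasureTheory.Measure

theorem ternaryChi_le_holder_general
    {Θ : Type*} [MeasurableSpace Θ]
    (p q r : Measure Θ)
    [IsProbabilityMeasure p] [IsProbabilityMeasure q] [IsProbabilityMeasure r]
    (hpq : p ≪ q) (hqr : q ≪ r)
    (u v : ℝ) (hu : 1 < u) (huv : 1 / u + 1 / v = 1)
    (j : ℕ) (hj : 2 ≤ j) :
    ∫⁻ θ, (max (p.rnDeriv r θ - q.rnDeriv r θ) (q.rnDeriv r θ - p.rnDeriv r θ)) ^ j ∂r ≤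
      EReal.exp (((((j : ℝ) - 1) : ℝ) : EReal) * renyiDiv q r (((j : ℝ) - 1) * v + 1)) *
        (∫⁻ θ, (max (p.rnDeriv q θ - 1) (1 - p.rnDeriv q θ)) ^ ((j : ℝ) * u) ∂q) ^
          (1 / u) := by
  obtain ⟨n, rfl⟩ : ∃ n, j = n + 1 := ⟨j - 1, by omega⟩
  have hn : (n : ℝ) ≠ 0 := by norm_cast; omega
  have hconj : u.HolderConjugate v :=
    Real.holderConjugate_iff.mpr ⟨hu, by simpa only [one_div] using huv⟩
  have hexp : (((n + 1 : ℕ) : ℝ) - 1) * ((((n + 1 : ℕ) : ℝ) - 1) * v + 1 - 1)⁻¹ = 1 / v := by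
    simp only [Nat.cast_add, Nat.cast_one, add_sub_cancel_right]
    field_simp
  have horder : (((n + 1 : ℕ) : ℝ) - 1) * v + 1 = n * v + 1 := by push_cast; ring
  calc _ = ∫⁻ θ, (max (p.rnDeriv q θ - 1) (1 - p.rnDeriv q θ) * q.rnDeriv r θ) ^ (n + 1) ∂r :=
        lintegral_congr_ae <| (Measure.rnDeriv_max_tsub_ae_eq hpq).fun_comp (· ^ (n + 1))
    _ ≤ _ := Measure.lintegral_mul_rnDeriv_pow_succ_le hqr (by fun_prop) n hconj
    _ = _ := by rw [exp_mul_renyiDiv, hexp, horder, mul_comm]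

/-- **Hölder bound on the ternary Pearson–Vajda divergence (Lemma, Appendix F)**:
for conjugate exponents `u, v ∈ (1,∞)` and integers `j ≥ 2`,
`∫ |dp/dr − dq/dr|^j dr ≤ e^{(j−1)·D_{(j−1)v+1}(q‖r)} · (∫ |dp/dq − 1|^{ju} dq)^{1/u}`. -/
theorem ternaryChi_le_holder
    {Θ : Type*} [MeasurableSpace Θ]
    (p q r : Measure Θ)
    [IsProbabilityMeasure p] [IsProbabilityMeasure q] [IsProbabilityMeasure r]
    (hpq : p ≪ q) (hqr : q ≪ r)
    (u v : ℝ) (hu : 1 < u) (hv : 1 < v) (huv : 1 / u + 1 / v = 1)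
    (j : ℕ) (hj : 2 ≤ j) :
    ∫⁻ θ, (max (p.rnDeriv r θ - q.rnDeriv r θ) (q.rnDeriv r θ - p.rnDeriv r θ)) ^ j ∂r ≤
      EReal.exp (((((j : ℝ) - 1) : ℝ) : EReal) * renyiDiv q r (((j : ℝ) - 1) * v + 1)) *
        (∫⁻ θ, (max (p.rnDeriv q θ - 1) (1 - p.rnDeriv q θ)) ^ ((j : ℝ) * u) ∂q) ^
          (1 / u) :=
  ternaryChi_le_holder_general p q r hpq hqr u v hu huv j hj
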